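/- arXiv:1712.08455 — 5 statements merged into one kernel-verified Lean document; each statement's English description precedes it below -/
import Mathlib

section
/- Let L be regular with canonical ordered automaton (D_L, A, ·, ⊆, L, F_L), and let H ⊆ D_L be upward closed with respect to inclusion. Then the language recognized by (D_L, A, ·, ⊆, L, H) can be expressed as a finite union of finite intersections of right quotients Lv⁻¹ of L. -/
/-- If `H` is an upward closed set of states of the canonical ordered automaton of a regular
language `L`, then the language recognized with final states `H` is a finite union of
finite intersections of right quotients `Lv⁻¹` of `L`. -/
theorem upward_closed_final_states_gives_union_of_intersections_of_right_quotients
    {A : Type*} (L : Set (List A))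
    (hreg : Set.Finite {K : Set (List A) | ∃ u : List A, K = {w | u ++ w ∈ L}})
    (H : Set (Set (List A)))
    (hHstates : ∀ K ∈ H, ∃ u : List A, K = {w | u ++ w ∈ L})
    (hHup : ∀ K K' : Set (List A), K ∈ H → (∃ u : List A, K' = {w | u ++ w ∈ L}) →
      K ⊆ K' → K' ∈ H) :
    ∃ 𝒮 : Finset (Finset (List A)),
      {w : List A | {x | w ++ x ∈ L} ∈ H}
        = ⋃ s ∈ 𝒮, ⋂ v ∈ (s : Finset (List A)), {w : List A | w ++ v ∈ L} := by
  classical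
  have hHfin : H.Finite := hreg.subset (fun K hK => hHstates K hK)
  let g : Set (List A) → Set (List A) → List A := fun K K' =>
    if h : ∃ v, v ∈ K ∧ v ∉ K' then h.choose else []
  let s : Set (List A) → Finset (List A) := fun K =>
    (hreg.toFinset.filter (fun K' => ¬ K ⊆ K')).image (g K)
  refine ⟨hHfin.toFinset.image s, ?_⟩
  ext w
  simp only [Set.mem_iUnion, Finset.mem_image, Set.mem_setOf_eq, Set.mem_iInter,
    Set.Finite.mem_toFinset, exists_prop, exists_exists_and_eq_and]
  constructor
  · intro hw
    refine ⟨{x | w ++ x ∈ L}, hw, ?_⟩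
    intro v hv
    simp only [s, Finset.mem_image, Finset.mem_filter, Set.Finite.mem_toFinset] at hv
    obtain ⟨K', ⟨hK'Q, hns⟩, rfl⟩ := hv
    have hex : ∃ v, v ∈ {x | w ++ x ∈ L} ∧ v ∉ K' := by
      rcases Set.not_subset.mp hns with ⟨v, hv1, hv2⟩; exact ⟨v, hv1, hv2⟩
    simp only [g, dif_pos hex]
    exact hex.choose_spec.1
  · rintro ⟨K, hKH, ht⟩
    have hKsub : K ⊆ {x | w ++ x ∈ L} := by
      by_contra hns
      have hQmem : {x | w ++ x ∈ L} ∈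
          {K : Set (List A) | ∃ u : List A, K = {w | u ++ w ∈ L}} := ⟨w, rfl⟩
      have hmem : g K {x | w ++ x ∈ L} ∈ s K := by
        simp only [s, Finset.mem_image]
        exact ⟨_, Finset.mem_filter.mpr ⟨hreg.mem_toFinset.mpr hQmem, hns⟩, rfl⟩
      have hwv := ht _ hmem
      have hex : ∃ v, v ∈ K ∧ v ∉ {x | w ++ x ∈ L} := by
        rcases Set.not_subset.mp hns with ⟨v, hv1, hv2⟩; exact ⟨v, hv1, hv2⟩
      simp only [g, dif_pos hex] at hwv
      exact hex.choose_spec.2 hwv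
    exact hHup K _ hKH ⟨w, rfl⟩ hKsub
end

section
/- Every 1-generated ordered semiautomaton (Q, A, ·, ≤), i.e. one with Q = {i·u : u ∈ A*} for some state i, is isomorphic (via a surjective, backward order preserving homomorphism) to a subsemiautomaton of a finite product of canonical ordered semiautomata of languages recognized by (Q, A, ·, ≤). -/
/-- Every 1-generated ordered semiautomaton embeds (via a backward order preserving
homomorphism) into the product, over all its states `q`, of the canonical ordered
semiautomata of the languages `L(q)` it recognizes with final set the principal upset of
`q`.  The component map sends `p` to the language accepted from `p` with final set `↑q`,
which is indeed a state (a left quotient) of the canonical semiautomaton of `L(q)`. -/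
theorem one_generated_embeds_into_product_of_canonical {Q A : Type*}
    [PartialOrder Q] [Fintype Q]
    (step : Q → A → Q) (hmono : ∀ a : A, Monotone fun q => step q a) (i : Q)
    (hgen : ∀ p : Q, ∃ u : List A, List.foldl step i u = p) :
    -- L(q) : the language recognized with initial state i and final set ↑q
    let Lq : Q → Set (List A) := fun q => {u | q ≤ List.foldl step i u}
    -- the map into the product of the canonical semiautomata of the L(q)
    let φ : Q → Q → Set (List A) := fun p q => {w | q ≤ List.foldl step p w}
    -- each component of φ is a state (left quotient) of the canonical semiautomaton of L(q)
    (∀ p q : Q, ∃ u : List A, φ p q = {w | u ++ w ∈ Lq q}) ∧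
    -- φ commutes with the letter actions (canonical transitions are K·a = a⁻¹K)
    (∀ (p : Q) (a : A) (q : Q), φ (step p a) q = {w | a :: w ∈ φ p q}) ∧
    -- φ is isotone
    (∀ p p' : Q, p ≤ p' → ∀ q : Q, φ p q ⊆ φ p' q) ∧
    -- φ is backward order preserving (hence injective: an isomorphism onto its image)
    (∀ p p' : Q, (∀ q : Q, φ p q ⊆ φ p' q) → p ≤ p') := by
  intro Lq φ
  have hfold : ∀ (w : List A) (p p' : Q), p ≤ p' →
      List.foldl step p w ≤ List.foldl step p' w := by
    intro w
    induction w with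
    | nil => intro p p' h; exact h
    | cons a w ih => intro p p' h; exact ih _ _ (hmono a h)
  refine ⟨?_, ?_, ?_, ?_⟩
  · intro p q
    obtain ⟨u, hu⟩ := hgen p
    exact ⟨u, by ext w; simp [φ, Lq, List.foldl_append, hu]⟩
  · intro p a q
    ext w; simp [φ]
  · intro p p' h q w hw
    exact le_trans hw (hfold w p p' h)
  · intro p p' h
    exact h p (show ([] : List A) ∈ φ p p from le_refl p)
end

section
/- Every homomorphic image of a counter-free semiautomaton is counter-free: if φ: (Q, A, ·) → (P, A, ∘) is a surjective semiautomaton homomorphism, Q is finite and counter-free, then P is counter-free. -/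
/-- A homomorphic image of a finite counter-free semiautomaton is counter-free. -/
theorem homomorphic_image_counter_free {Q P A : Type*} [Fintype Q]
    (stepQ : Q → A → Q) (stepP : P → A → P)
    (φ : Q → P) (hsurj : Function.Surjective φ)
    (hcomm : ∀ (q : Q) (a : A), φ (stepQ q a) = stepP (φ q) a)
    (hcf : ∀ (u : List A) (q : Q) (n : ℕ), 1 ≤ n →
      (fun s => List.foldl stepQ s u)^[n] q = q → List.foldl stepQ q u = q) :
    ∀ (u : List A) (p : P) (n : ℕ), 1 ≤ n →
      (fun s => List.foldl stepP s u)^[n] p = p → List.foldl stepP p u = p := by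
  have hcommfold : ∀ (v : List A) (q : Q),
      φ (List.foldl stepQ q v) = List.foldl stepP (φ q) v := by
    intro v
    induction v with
    | nil => intro q; rfl
    | cons a t ih => intro q; simp only [List.foldl, ih, hcomm]
  intro u p n hn hfix
  set g : Q → Q := fun s => List.foldl stepQ s u with hg
  set f : P → P := fun s => List.foldl stepP s u with hf
  have hcommg : ∀ q, φ (g q) = f (φ q) := fun q => hcommfold u q
  have hcommit : ∀ (k : ℕ) (q : Q), φ (g^[k] q) = f^[k] (φ q) := by
    intro k
    induction k with
    | zero => intro q; rfl
    | succ k ih =>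
      intro q
      rw [Function.iterate_succ_apply, Function.iterate_succ_apply, ← hcommg, ih]
  obtain ⟨q, rfl⟩ := hsurj p
  obtain ⟨i, j, hne, heq⟩ := Finite.exists_ne_map_eq_of_infinite (fun i : ℕ => g^[n * i] q)
  wlog hij : i < j generalizing i j
  · exact this j i hne.symm heq.symm (by omega)
  have key : g^[n * (j - i)] (g^[n * i] q) = g^[n * i] q := by
    rw [← Function.iterate_add_apply, ← Nat.mul_add, Nat.sub_add_cancel hij.le]
    exact heq.symm
  have hfixq : g (g^[n * i] q) = g^[n * i] q :=
    hcf u (g^[n * i] q) (n * (j - i)) (Nat.mul_pos hn (by omega)) key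
  have hpfix : f^[n * i] (φ q) = φ q := by
    rw [Function.iterate_mul]
    exact Function.iterate_fixed hfix i
  have := hcommg (g^[n * i] q)
  rw [hfixq, hcommit, hpfix] at this
  exact this.symm
end

section
/- A finite acyclic semiautomaton (Q, A, ·) is confluent if and only if for every state q and all words u, v ∈ A*, q·u·(uv)^{|Q|} = q·v·(uv)^{|Q|}. -/
/-- A finite acyclic semiautomaton is confluent iff for every state `q` and words `u, v`,
`q·u·(uv)^{|Q|} = q·v·(uv)^{|Q|}`. -/
theorem acyclic_confluent_iff {Q A : Type*} [Fintype Q] (step : Q → A → Q)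
    (hacyclic : ∀ (q : Q) (u : List A), u ≠ [] → List.foldl step q u = q →
      ∀ a ∈ u, step q a = q) :
    (∀ (q : Q) (u v : List A), ∃ w : List A, (∀ a ∈ w, a ∈ u ++ v) ∧
        List.foldl step (List.foldl step q u) w = List.foldl step (List.foldl step q v) w)
    ↔ (∀ (q : Q) (u v : List A),
        List.foldl step (List.foldl step q u)
            (List.flatten (List.replicate (Fintype.card Q) (u ++ v)))
          = List.foldl step (List.foldl step q v)
            (List.flatten (List.replicate (Fintype.card Q) (u ++ v)))) := by
  classical
  set n := Fintype.card Q with hn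
  have fixword : ∀ (x : Q) (w : List A), (∀ a ∈ w, step x a = x) →
      List.foldl step x w = x := by
    intro x w h
    induction w with
    | nil => rfl
    | cons a t ih =>
      simp only [List.foldl_cons, h a (by simp)]
      exact ih (fun b hb => h b (by simp [hb]))
  constructor
  · intro hconf q u v
    by_cases hne : u ++ v = []
    · obtain ⟨hu, hv⟩ := List.append_eq_nil_iff.mp hne
      subst hu; subst hv; simp
    · set s := u ++ v with hs
      set f : Q → Q := fun x => List.foldl step x s with hf
      have hiter : ∀ (x : Q) (k : ℕ),
          List.foldl step x (List.flatten (List.replicate k s)) = f^[k] x := by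
        intro x k
        induction k generalizing x with
        | zero => rfl
        | succ k ih =>
          rw [List.replicate_succ, List.flatten_cons, List.foldl_append,
            Function.iterate_succ_apply]
          exact ih (f x)
      have hmemW : ∀ (k : ℕ), k ≠ 0 → ∀ a ∈ s,
          a ∈ List.flatten (List.replicate k s) := by
        intro k hk a ha
        exact List.mem_flatten.mpr ⟨s, List.mem_replicate.mpr ⟨hk, rfl⟩, ha⟩
      have hWne : ∀ (k : ℕ), k ≠ 0 → List.flatten (List.replicate k s) ≠ [] := by
        intro k hk hW
        obtain ⟨m, rfl⟩ := Nat.exists_eq_succ_of_ne_zero hk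
        rw [List.replicate_succ, List.flatten_cons] at hW
        exact hne (List.append_eq_nil_iff.mp hW).1
      -- periodic points are fixed
      have hfix : ∀ (x : Q) (k : ℕ), k ≠ 0 → f^[k] x = x → f x = x := by
        intro x k hk hxk
        have hW : List.foldl step x (List.flatten (List.replicate k s)) = x := by
          rw [hiter]; exact hxk
        have hsteps := hacyclic x _ (hWne k hk) hW
        exact fixword x s (fun a ha => hsteps a (hmemW k hk a ha))
      -- after n iterations we are at a fixed point
      have hstab : ∀ x : Q, f (f^[n] x) = f^[n] x := by
        intro x
        obtain ⟨i, j, hij, hmap⟩ :=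
          Fintype.exists_ne_map_eq_of_card_lt (fun i : Fin (n + 1) => f^[(i : ℕ)] x)
            (by simp [hn])
        wlog hlt : (i : ℕ) < (j : ℕ) generalizing i j
        · exact this j i hij.symm hmap.symm
            (lt_of_le_of_ne (Nat.le_of_not_lt hlt) (fun h => hij (Fin.ext h.symm)))
        have hper : f^[(j : ℕ) - (i : ℕ)] (f^[(i : ℕ)] x) = f^[(i : ℕ)] x := by
          rw [← Function.iterate_add_apply, Nat.sub_add_cancel hlt.le]
          exact hmap.symm
        have hfy : f (f^[(i : ℕ)] x) = f^[(i : ℕ)] x :=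
          hfix _ _ (Nat.sub_ne_zero_of_lt hlt) hper
        have hin : (i : ℕ) ≤ n := by omega
        have : f^[n] x = f^[(i : ℕ)] x := by
          conv_lhs => rw [← Nat.sub_add_cancel hin, Function.iterate_add_apply]
          exact Function.iterate_fixed hfy _
        rw [this, hfy]
      set W := List.flatten (List.replicate n s) with hW
      set p := List.foldl step (List.foldl step q u) W with hp
      set r := List.foldl step (List.foldl step q v) W with hr
      have hpf : f p = p := by rw [hp, hiter]; exact hstab _
      have hrf : f r = r := by rw [hr, hiter]; exact hstab _
      have hpsteps : ∀ a ∈ s, step p a = p := hacyclic p s hne hpf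
      have hrsteps : ∀ a ∈ s, step r a = r := hacyclic r s hne hrf
      obtain ⟨w, hw1, hw2⟩ := hconf q (u ++ W) (v ++ W)
      have hws : ∀ a ∈ w, a ∈ s := by
        intro a ha
        have := hw1 a ha
        simp only [List.mem_append] at this
        rcases this with (h | h) | (h | h)
        · exact List.mem_append.mpr (Or.inl h)
        · rcases List.mem_flatten.mp h with ⟨l, hl, hal⟩
          rwa [(List.mem_replicate.mp hl).2] at hal
        · exact List.mem_append.mpr (Or.inr h)
        · rcases List.mem_flatten.mp h with ⟨l, hl, hal⟩
          rwa [(List.mem_replicate.mp hl).2] at hal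
      rw [List.foldl_append, List.foldl_append, ← hp, ← hr,
        fixword p w (fun a ha => hpsteps a (hws a ha)),
        fixword r w (fun a ha => hrsteps a (hws a ha))] at hw2
      exact hw2
  · intro h q u v
    refine ⟨List.flatten (List.replicate n (u ++ v)), ?_, h q u v⟩
    intro a ha
    rcases List.mem_flatten.mp ha with ⟨l, hl, hal⟩
    rwa [(List.mem_replicate.mp hl).2] at hal
end

section
/- A finite semiautomaton is weakly confluent if and only if it is a disjoint union of synchronizing semiautomata; equivalently, within each connected component of a weakly confluent semiautomaton, every two states p, q admit a word w with p·w = q·w. -/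
/-- A finite semiautomaton is weakly confluent iff every two states in the same connected
component can be merged by some word; i.e. iff it is a disjoint union of synchronizing
semiautomata (its connected components). -/
theorem weakly_confluent_iff_union_of_synchronizing {Q A : Type*} [Fintype Q]
    (step : Q → A → Q) :
    (∀ (q : Q) (u v : List A), ∃ w : List A,
        List.foldl step (List.foldl step q u) w = List.foldl step (List.foldl step q v) w)
    ↔ (∀ p q : Q,
        Relation.ReflTransGen
          (fun x y : Q => (∃ a : A, step x a = y) ∨ (∃ a : A, step y a = x)) p q →
        ∃ w : List A, List.foldl step p w = List.foldl step q w) := by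
  constructor
  · intro hwc p q hpq
    induction hpq with
    | refl => exact ⟨[], rfl⟩
    | @tail c q' hpc hrel ih =>
      obtain ⟨w, hw⟩ := ih
      rcases hrel with ⟨a, ha⟩ | ⟨a, ha⟩
      · obtain ⟨t, ht⟩ := hwc c w (a :: w)
        refine ⟨w ++ t, ?_⟩
        rw [List.foldl_append, List.foldl_append, hw]
        simpa [List.foldl_cons, ha] using ht
      · obtain ⟨t, ht⟩ := hwc q' (a :: w) w
        refine ⟨w ++ t, ?_⟩
        rw [List.foldl_append, List.foldl_append, hw]
        simpa [List.foldl_cons, ha] using ht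
  · intro h q u v
    set r : Q → Q → Prop :=
      fun x y : Q => (∃ a : A, step x a = y) ∨ (∃ a : A, step y a = x) with hr
    have hreach : ∀ (u : List A) (q : Q),
        Relation.ReflTransGen r q (List.foldl step q u) := by
      intro u
      induction u with
      | nil => intro q; exact Relation.ReflTransGen.refl
      | cons a u ih =>
        intro q
        exact Relation.ReflTransGen.head (Or.inl ⟨a, rfl⟩) (ih (step q a))
    have hsymm : Symmetric r := fun x y hxy => hxy.symm
    exact h _ _ (((haveI : Std.Symm r := ⟨hsymm⟩; Std.Symm.symm (r := Relation.ReflTransGen r) _ _) (hreach u q)).trans (hreach v q))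
end
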